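/- arXiv:1607.03294 — 2 statements merged into one kernel-verified Lean document; each statement's English description precedes it below -/
import Mathlib

section
/- Let μ ≠ 0 be real and let A : (0,∞) → ℝ be any function satisfying T ≤ A(T) ≤ T + √T/|μ| for all T > 0. Then for every T > 0 the quantity G(T) := F(2/(μ²·A(T))) - F(2/(μ²·T)) + (2/(μ²·T)) · ∫_T^{A(T)} F(2/(μ²·x)) · (1/x) dx satisfies 0 ≤ G(T) ≤ 2/(|μ|·√T) + 1/(μ²·T); in particular G(T) → 0 as T → +∞. -/
open MeasureTheory Real Filter Topology Set

/-- The exponential integral `E1 x = ∫_x^∞ e^{-t}/t dt`. -/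
noncomputable def E1 (x : ℝ) : ℝ := ∫ t in Set.Ioi x, Real.exp (-t) / t

/-- `F x = e^x * E1 x`. -/
noncomputable def F (x : ℝ) : ℝ := Real.exp x * E1 x

/-!
Substituting `t = x + s` gives `F x = ∫_0^∞ e^{-s} / (x + s) ds` for `x > 0`. Comparing integrands,
`F` is nonnegative and antitone, `F x ≤ 1 / x`, and `F y - F z ≤ (z - y) / y` for `0 < y ≤ z`
(bound the kernel difference by `(z - y) / (y + s)²`). With `a = 2 / μ²`, `y = a / A T`, `z = a / T`,
both the difference of `F`-values and the integral term of `G T` are then at most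
`(A T - T) / T ≤ 1 / (|μ| √T)`.
-/

lemma integrableOn_exp_neg_Ioi_zero : IntegrableOn (fun s => exp (-s)) (Ioi (0 : ℝ)) := by
  simpa using exp_neg_integrableOn_Ioi 0 one_pos

section KernelRepresentation

variable {x y z : ℝ}

lemma integrableOn_exp_neg_div_add (hx : 0 < x) :
    IntegrableOn (fun s => exp (-s) / (x + s)) (Ioi 0) := by
  refine (integrableOn_exp_neg_Ioi_zero.mul_const x⁻¹).mono' ?_ ?_
  · refine ContinuousOn.aestronglyMeasurable ?_ measurableSet_Ioi
    exact ContinuousOn.div (by fun_prop) (by fun_prop) fun s (hs : 0 < s) => by positivity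
  · filter_upwards [ae_restrict_mem measurableSet_Ioi] with s (hs : 0 < s)
    rw [norm_of_nonneg (by positivity), div_eq_mul_inv]
    gcongr
    linarith

lemma F_eq_integral (x : ℝ) : F x = ∫ s in Ioi 0, exp (-s) / (x + s) := by
  have hpre : (· + x) ⁻¹' Ioi x = Ioi 0 := by simp
  rw [F, E1, ← integral_const_mul,
    ← (measurePreserving_add_right volume x).setIntegral_preimage_emb
      (measurableEmbedding_addRight x), hpre]
  refine setIntegral_congr_fun measurableSet_Ioi fun s _ => ?_
  rw [mul_div_assoc', ← exp_add, add_comm s x]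
  ring_nf

lemma F_nonneg (hx : 0 < x) : 0 ≤ F x := by
  rw [F_eq_integral x]
  exact setIntegral_nonneg measurableSet_Ioi fun s (hs : 0 < s) => by positivity

lemma F_le_inv (hx : 0 < x) : F x ≤ x⁻¹ :=
  calc F x ≤ ∫ s in Ioi 0, exp (-s) * x⁻¹ := by
        rw [F_eq_integral x]
        refine setIntegral_mono_on (integrableOn_exp_neg_div_add hx)
          (integrableOn_exp_neg_Ioi_zero.mul_const _) measurableSet_Ioi fun s (hs : 0 < s) => ?_
        rw [div_eq_mul_inv]
        gcongr
        linarith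
    _ = x⁻¹ := by rw [integral_mul_const, integral_exp_neg_Ioi_zero, one_mul]

lemma F_antitoneOn : AntitoneOn F (Ioi 0) := by
  intro y (hy : 0 < y) z (hz : 0 < z) hyz
  rw [F_eq_integral y, F_eq_integral z]
  refine setIntegral_mono_on (integrableOn_exp_neg_div_add hz) (integrableOn_exp_neg_div_add hy)
    measurableSet_Ioi fun s (hs : 0 < s) => ?_
  gcongr

lemma integrableOn_and_integral_Ioi_inv_add_sq (hy : 0 < y) :
    IntegrableOn (fun s => ((y + s) ^ 2)⁻¹) (Ioi 0) ∧ ∫ s in Ioi 0, ((y + s) ^ 2)⁻¹ = y⁻¹ := by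
  have hderiv : ∀ s ∈ Ici (0 : ℝ), HasDerivAt (fun s => -(y + s)⁻¹) ((y + s) ^ 2)⁻¹ s := by
    intro s (hs : 0 ≤ s)
    exact (((hasDerivAt_id' s).const_add y).inv (by positivity)).neg.congr_deriv (by ring)
  have hnonneg : ∀ s ∈ Ioi (0 : ℝ), 0 ≤ ((y + s) ^ 2)⁻¹ := fun s _ => by positivity
  have hlim : Tendsto (fun s => -(y + s)⁻¹) atTop (𝓝 0) := by
    simpa using (tendsto_inv_atTop_zero.comp (tendsto_atTop_add_const_left atTop y tendsto_id)).neg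
  refine ⟨integrableOn_Ioi_deriv_of_nonneg' hderiv hnonneg hlim, ?_⟩
  rw [integral_Ioi_of_hasDerivAt_of_nonneg' hderiv hnonneg hlim]
  simp

lemma F_sub_F_le (hy : 0 < y) (hyz : y ≤ z) : F y - F z ≤ (z - y) / y := by
  have hz : 0 < z := hy.trans_le hyz
  obtain ⟨hint, hval⟩ := integrableOn_and_integral_Ioi_inv_add_sq hy
  calc F y - F z = ∫ s in Ioi 0, (exp (-s) / (y + s) - exp (-s) / (z + s)) := by
        rw [F_eq_integral y, F_eq_integral z,
          integral_sub (integrableOn_exp_neg_div_add hy) (integrableOn_exp_neg_div_add hz)]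
    _ ≤ ∫ s in Ioi 0, (z - y) * ((y + s) ^ 2)⁻¹ := by
        refine setIntegral_mono_on
          ((integrableOn_exp_neg_div_add hy).sub (integrableOn_exp_neg_div_add hz))
          (hint.const_mul _) measurableSet_Ioi fun s (hs : 0 < s) => ?_
        have hys : 0 < y + s := by linarith
        have hzs : 0 < z + s := by linarith
        have hexp : exp (-s) ≤ 1 := exp_le_one_iff.mpr (by linarith)
        calc exp (-s) / (y + s) - exp (-s) / (z + s)
            = exp (-s) * (z - y) / ((y + s) * (z + s)) := by field_simp; ring
          _ ≤ 1 * (z - y) / ((y + s) * (y + s)) := by gcongr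
          _ = (z - y) * ((y + s) ^ 2)⁻¹ := by ring
    _ = (z - y) / y := by rw [integral_const_mul, hval, div_eq_mul_inv]

end KernelRepresentation

section DifferenceAndIntegralTerm

variable {a T B : ℝ}

lemma integral_F_div_mul_inv_le (ha : 0 < a) (hT : 0 < T) (hTB : T ≤ B) :
    ∫ x in T..B, F (a / x) * (1 / x) ≤ (B - T) / a := by
  rw [intervalIntegral.integral_of_le hTB]
  calc ∫ x in Ioc T B, F (a / x) * (1 / x) ≤ ∫ x in Ioc T B, a⁻¹ := by
        refine integral_mono_of_nonneg ?_ (integrableOn_const (by simp)) ?_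
        all_goals filter_upwards [ae_restrict_mem measurableSet_Ioc] with x hx
        all_goals have hx0 : 0 < x := hT.trans hx.1
        · exact mul_nonneg (F_nonneg (by positivity)) (by positivity)
        · calc F (a / x) * (1 / x) ≤ (a / x)⁻¹ * (1 / x) := by
                gcongr
                exact F_le_inv (by positivity)
            _ = a⁻¹ := by field_simp
    _ = (B - T) / a := by
        rw [setIntegral_const, Real.volume_real_Ioc_of_le hTB, smul_eq_mul, div_eq_mul_inv]

lemma F_div_sub_add_integral_mem_Icc (ha : 0 < a) (hT : 0 < T) (hTB : T ≤ B) :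
    F (a / B) - F (a / T) + a / T * ∫ x in T..B, F (a / x) * (1 / x) ∈
      Icc 0 (2 * ((B - T) / T)) := by
  have hB : 0 < B := hT.trans_le hTB
  have hy : 0 < a / B := by positivity
  have hyz : a / B ≤ a / T := div_le_div_of_nonneg_left ha.le hT hTB
  have hanti : F (a / T) ≤ F (a / B) := F_antitoneOn hy (hy.trans_le hyz) hyz
  have hI0 : 0 ≤ ∫ x in T..B, F (a / x) * (1 / x) :=
    intervalIntegral.integral_nonneg hTB fun x hx => by
      have hx0 : 0 < x := hT.trans_le hx.1
      exact mul_nonneg (F_nonneg (by positivity)) (by positivity)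
  have hdiff : F (a / B) - F (a / T) ≤ (B - T) / T := by
    calc F (a / B) - F (a / T) ≤ (a / T - a / B) / (a / B) := F_sub_F_le hy hyz
      _ = (B - T) / T := by field_simp
  have hint : a / T * ∫ x in T..B, F (a / x) * (1 / x) ≤ (B - T) / T := by
    calc a / T * ∫ x in T..B, F (a / x) * (1 / x) ≤ a / T * ((B - T) / a) := by
          gcongr
          exact integral_F_div_mul_inv_le ha hT hTB
      _ = (B - T) / T := by field_simp
  constructor
  · have := mul_nonneg (by positivity : 0 ≤ a / T) hI0
    linarith
  · linarith

end DifferenceAndIntegralTerm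

theorem G_bound_and_tendsto_zero (μ : ℝ) (hμ : μ ≠ 0) (A : ℝ → ℝ)
    (hA : ∀ T : ℝ, 0 < T → T ≤ A T ∧ A T ≤ T + Real.sqrt T / |μ|)
    (G : ℝ → ℝ)
    (hG : ∀ T : ℝ, G T =
      F (2 / (μ ^ 2 * A T)) - F (2 / (μ ^ 2 * T)) +
        (2 / (μ ^ 2 * T)) * (∫ x in T..(A T), F (2 / (μ ^ 2 * x)) * (1 / x))) :
    (∀ T : ℝ, 0 < T →
      0 ≤ G T ∧ G T ≤ 2 / (|μ| * Real.sqrt T) + 1 / (μ ^ 2 * T)) ∧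
      Tendsto G atTop (nhds 0) := by
  have hμ' : 0 < |μ| := abs_pos.mpr hμ
  have hμ2 : 0 < μ ^ 2 := by positivity
  have hbound : ∀ T : ℝ, 0 < T →
      0 ≤ G T ∧ G T ≤ 2 / (|μ| * Real.sqrt T) + 1 / (μ ^ 2 * T) := by
    intro T hT
    obtain ⟨hTA, hAT⟩ := hA T hT
    obtain ⟨hG0, hGle⟩ := F_div_sub_add_integral_mem_Icc (by positivity : 0 < 2 / μ ^ 2) hT hTA
    simp only [div_div, ← hG] at hG0 hGle
    have hgap : (A T - T) / T ≤ 1 / (|μ| * √T) :=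
      calc (A T - T) / T ≤ (√T / |μ|) / T := by gcongr; linarith
        _ = 1 / (|μ| * √T) := by field_simp; rw [sq_sqrt hT.le]
    refine ⟨hG0, hGle.trans ?_⟩
    have : 0 ≤ 1 / (μ ^ 2 * T) := by positivity
    have : 2 / (|μ| * √T) = 2 * (1 / (|μ| * √T)) := by ring
    linarith
  have hlim : Tendsto (fun T => 2 / (|μ| * √T) + 1 / (μ ^ 2 * T)) atTop (𝓝 0) := by
    simpa only [add_zero, id_eq] using
      ((tendsto_const_nhds (x := (2 : ℝ))).div_atTop (tendsto_sqrt_atTop.const_mul_atTop hμ')).add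
        ((tendsto_const_nhds (x := (1 : ℝ))).div_atTop (tendsto_id.const_mul_atTop hμ2))
  refine ⟨hbound, squeeze_zero' ?_ ?_ hlim⟩ <;>
    filter_upwards [eventually_gt_atTop 0] with T hT
  exacts [(hbound T hT).1, (hbound T hT).2]
end

section
/- For every real μ ≠ 0, the function T ↦ (2/(μ²·T)) · ∫_0^T F(2/(μ²·x)) · (1/x) dx is nonnegative for all T > 0 and is O(log²(μ²T)/(μ²T)) as T → +∞. -/
open MeasureTheory Real Filter Asymptotics

/-!
Bounding `E1 y` by `e^{-y}/y` gives `F y ≤ 1/y`, and splitting the integral at `1` gives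
`F y ≤ e (1 - log y)` for `y ≤ 1`. Since `dx/x` is dilation invariant, the integral up to `T`
equals `∫_0^R F(2/u) du/u` with `R = μ²T`. On `(0, 2]` this integrand is at most `1/2`, and on
`[2, R]` at most `e (1 + log R) / u`, so the integral is `O(log² R)`.
-/

open Set

lemma integrableOn_exp_neg_div_self_Ioi {c : ℝ} (hc : 0 < c) :
    IntegrableOn (fun t : ℝ => exp (-t) / t) (Ioi c) := by
  refine ((integrableOn_exp_neg_Ioi c).div_const c).mono'
    (by fun_prop : Measurable fun t : ℝ => exp (-t) / t).aestronglyMeasurable ?_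
  filter_upwards [ae_restrict_mem measurableSet_Ioi] with t (ht : c < t)
  rw [norm_of_nonneg (by have := hc.trans ht; positivity)]
  gcongr

@[fun_prop]
lemma measurable_E1 : Measurable E1 := by
  have hE1 : E1 = fun y => ∫ t, (Ioi y).indicator (fun t => exp (-t) / t) t :=
    funext fun y => (integral_indicator measurableSet_Ioi).symm
  rw [hE1]
  refine (StronglyMeasurable.integral_prod_right ?_).measurable
  exact (Measurable.ite (measurableSet_lt measurable_fst measurable_snd) (by fun_prop)
    measurable_const).stronglyMeasurable

@[fun_prop]
lemma measurable_F : Measurable F := by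
  unfold F; fun_prop

lemma E1_nonneg {y : ℝ} (hy : 0 ≤ y) : 0 ≤ E1 y :=
  setIntegral_nonneg measurableSet_Ioi fun t (ht : y < t) => by
    have := hy.trans_lt ht; positivity

lemma F_nonneg_s14 {y : ℝ} (hy : 0 ≤ y) : 0 ≤ F y :=
  mul_nonneg (exp_pos y).le (E1_nonneg hy)

lemma E1_le_exp_neg_div {y : ℝ} (hy : 0 < y) : E1 y ≤ exp (-y) / y :=
  calc E1 y ≤ ∫ t in Ioi y, exp (-t) / y :=
        setIntegral_mono_on (integrableOn_exp_neg_div_self_Ioi hy)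
          ((integrableOn_exp_neg_Ioi y).div_const y) measurableSet_Ioi
          fun t (ht : y < t) => by gcongr
    _ = exp (-y) / y := by rw [integral_div, integral_exp_neg_Ioi]

lemma F_le_inv_s14 {y : ℝ} (hy : 0 < y) : F y ≤ y⁻¹ :=
  calc F y ≤ exp y * (exp (-y) / y) := by
        unfold F; gcongr; exact E1_le_exp_neg_div hy
    _ = y⁻¹ := by rw [mul_div_assoc', ← exp_add, add_neg_cancel, exp_zero, one_div]

lemma E1_eq_integral_Ioc_add {y z : ℝ} (hy : 0 < y) (hyz : y ≤ z) :
    E1 y = (∫ t in Ioc y z, exp (-t) / t) + E1 z := by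
  rw [E1, E1, ← Ioc_union_Ioi_eq_Ioi hyz]
  exact setIntegral_union Ioc_disjoint_Ioi_same measurableSet_Ioi
    ((integrableOn_exp_neg_div_self_Ioi hy).mono_set Ioc_subset_Ioi_self)
    (integrableOn_exp_neg_div_self_Ioi (hy.trans_le hyz))

lemma E1_le_one_sub_log {y : ℝ} (hy : 0 < y) (hy1 : y ≤ 1) : E1 y ≤ 1 - log y := by
  have hhead : ∫ t in Ioc y 1, exp (-t) / t ≤ ∫ t in Ioc y 1, t⁻¹ := by
    refine setIntegral_mono_on
      ((integrableOn_exp_neg_div_self_Ioi hy).mono_set Ioc_subset_Ioi_self) ?_ measurableSet_Ioc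
      fun t ht => ?_
    · refine (intervalIntegrable_iff_integrableOn_Ioc_of_le hy1).1
        (intervalIntegral.intervalIntegrable_inv (fun t ht => ?_) continuousOn_id)
      rw [uIcc_of_le hy1] at ht
      exact (hy.trans_le ht.1).ne'
    · have := hy.trans ht.1
      rw [div_eq_mul_inv]
      exact mul_le_of_le_one_left (by positivity) (exp_le_one_iff.2 (by linarith))
  have htail : E1 1 ≤ 1 :=
    (E1_le_exp_neg_div one_pos).trans (by rw [div_one, exp_le_one_iff]; norm_num)
  have hinv : ∫ t in Ioc y 1, t⁻¹ = -log y := by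
    rw [← intervalIntegral.integral_of_le hy1, integral_inv_of_pos hy one_pos, one_div, log_inv]
  linarith [E1_eq_integral_Ioc_add hy hy1]

lemma F_le_exp_one_mul_one_sub_log {y : ℝ} (hy : 0 < y) (hy1 : y ≤ 1) :
    F y ≤ exp 1 * (1 - log y) :=
  mul_le_mul (exp_le_exp.2 hy1) (E1_le_one_sub_log hy hy1) (E1_nonneg hy.le) (exp_pos 1).le

lemma F_two_div_mul_one_div_nonneg {u : ℝ} (hu : 0 ≤ u) : 0 ≤ F (2 / u) * (1 / u) :=
  mul_nonneg (F_nonneg_s14 (by positivity)) (by positivity)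

lemma F_two_div_mul_one_div_le_half {u : ℝ} (hu : 0 < u) : F (2 / u) * (1 / u) ≤ 1 / 2 :=
  calc F (2 / u) * (1 / u) ≤ (2 / u)⁻¹ * (1 / u) := by
        gcongr; exact F_le_inv_s14 (by positivity)
    _ = 1 / 2 := by field_simp

lemma F_two_div_mul_one_div_le {u : ℝ} (hu : 2 ≤ u) :
    F (2 / u) * (1 / u) ≤ exp 1 * (1 + log u) * (1 / u) := by
  have hu0 : 0 < u := by linarith
  have hlog : 1 - log (2 / u) ≤ 1 + log u := by
    rw [log_div two_ne_zero hu0.ne']; linarith [log_nonneg one_le_two]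
  gcongr
  calc F (2 / u) ≤ exp 1 * (1 - log (2 / u)) :=
        F_le_exp_one_mul_one_sub_log (by positivity) ((div_le_one hu0).2 hu)
    _ ≤ exp 1 * (1 + log u) := by gcongr

lemma intervalIntegrable_F_two_div_mul_one_div {a b : ℝ} (ha : 0 ≤ a) (hb : 0 ≤ b) :
    IntervalIntegrable (fun u => F (2 / u) * (1 / u)) volume a b := by
  refine (intervalIntegrable_const (c := (1 / 2 : ℝ))).mono_fun' (by fun_prop) ?_
  filter_upwards [ae_restrict_mem measurableSet_uIoc] with u hu
  have hu0 : 0 < u := (le_min ha hb).trans_lt hu.1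
  rw [norm_of_nonneg (F_two_div_mul_one_div_nonneg hu0.le)]
  exact F_two_div_mul_one_div_le_half hu0

lemma integral_F_two_div_mul_one_div_le {R : ℝ} (hR : 2 ≤ R) :
    ∫ u in 0..R, F (2 / u) * (1 / u) ≤ 1 + exp 1 * (1 + log R) * log R := by
  have hR0 : 0 < R := by linarith
  have hhead : ∫ u in 0..2, F (2 / u) * (1 / u) ≤ 1 :=
    calc ∫ u in 0..2, F (2 / u) * (1 / u) ≤ ∫ _ in (0 : ℝ)..2, (1 / 2 : ℝ) :=
          intervalIntegral.integral_mono_on_of_le_Ioo zero_le_two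
            (intervalIntegrable_F_two_div_mul_one_div le_rfl zero_le_two) intervalIntegrable_const
            fun u hu => F_two_div_mul_one_div_le_half hu.1
      _ = 1 := by norm_num
  have hinv : IntervalIntegrable (fun u : ℝ => 1 / u) volume 2 R := by
    refine intervalIntegral.intervalIntegrable_one_div (fun u hu => ?_) continuousOn_id
    rw [uIcc_of_le hR] at hu
    exact (two_pos.trans_le hu.1).ne'
  have htail : ∫ u in 2..R, F (2 / u) * (1 / u) ≤ exp 1 * (1 + log R) * log R :=
    calc ∫ u in 2..R, F (2 / u) * (1 / u) ≤ ∫ u in 2..R, exp 1 * (1 + log R) * (1 / u) := by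
          refine intervalIntegral.integral_mono_on hR
            (intervalIntegrable_F_two_div_mul_one_div zero_le_two hR0.le)
            (hinv.const_mul _) fun u hu => (F_two_div_mul_one_div_le hu.1).trans ?_
          have := two_pos.trans_le hu.1
          gcongr
          exact hu.2
      _ = exp 1 * (1 + log R) * log (R / 2) := by
          rw [intervalIntegral.integral_const_mul, integral_one_div_of_pos two_pos hR0]
      _ ≤ exp 1 * (1 + log R) * log R := by
          have : 0 ≤ 1 + log R := by linarith [log_nonneg (one_le_two.trans hR)]
          gcongr
          linarith
  rw [← intervalIntegral.integral_add_adjacent_intervals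
    (intervalIntegrable_F_two_div_mul_one_div le_rfl zero_le_two)
    (intervalIntegrable_F_two_div_mul_one_div zero_le_two hR0.le)]
  linarith

lemma isBigO_two_div_mul_integral_F_two_div_mul_one_div :
    (fun R : ℝ => 2 / R * ∫ u in 0..R, F (2 / u) * (1 / u)) =O[atTop]
      fun R => log R ^ 2 / R := by
  refine IsBigO.of_bound 14 ?_
  filter_upwards [eventually_ge_atTop (exp 1)] with R hR
  have hR0 : 0 < R := (exp_pos 1).trans_le hR
  have hlog : 1 ≤ log R := by rwa [le_log_iff_exp_le hR0]
  have he : exp 1 < 3 := exp_one_lt_d9.trans (by norm_num)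
  have hnn : 0 ≤ ∫ u in 0..R, F (2 / u) * (1 / u) :=
    intervalIntegral.integral_nonneg hR0.le fun u hu => F_two_div_mul_one_div_nonneg hu.1
  have hle := integral_F_two_div_mul_one_div_le (by linarith [add_one_le_exp 1] : 2 ≤ R)
  have hsq : ∫ u in 0..R, F (2 / u) * (1 / u) ≤ 7 * log R ^ 2 := by nlinarith
  rw [norm_of_nonneg (by positivity), norm_of_nonneg (by positivity)]
  calc 2 / R * ∫ u in 0..R, F (2 / u) * (1 / u) ≤ 2 / R * (7 * log R ^ 2) := by gcongr
    _ = 14 * (log R ^ 2 / R) := by ring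

lemma intervalIntegral.integral_comp_mul_left_mul_one_div (φ : ℝ → ℝ) {m : ℝ}
    (hm : m ≠ 0) (a b : ℝ) :
    ∫ x in a..b, φ (m * x) * (1 / x) = ∫ u in m * a..m * b, φ u * (1 / u) := by
  have hscale : ∀ x, φ (m * x) * (1 / x) = m * (φ (m * x) * (1 / (m * x))) := fun x => by
    field_simp
  simp_rw [hscale, intervalIntegral.integral_const_mul,
    intervalIntegral.integral_comp_mul_left (fun u => φ u * (1 / u)) hm, smul_eq_mul,
    mul_inv_cancel_left₀ hm]

theorem lowerbound_tail_term_nonneg_and_isBigO (μ : ℝ) (hμ : μ ≠ 0) :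
    (∀ T : ℝ, 0 < T →
      0 ≤ (2 / (μ ^ 2 * T)) * (∫ x in (0 : ℝ)..T, F (2 / (μ ^ 2 * x)) * (1 / x))) ∧
      (fun T : ℝ => (2 / (μ ^ 2 * T)) * (∫ x in (0 : ℝ)..T, F (2 / (μ ^ 2 * x)) * (1 / x)))
        =O[atTop] (fun T : ℝ => (Real.log (μ ^ 2 * T)) ^ 2 / (μ ^ 2 * T)) := by
  have hm : 0 < μ ^ 2 := by positivity
  have hscale (T : ℝ) : ∫ x in (0 : ℝ)..T, F (2 / (μ ^ 2 * x)) * (1 / x) =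
      ∫ u in 0..μ ^ 2 * T, F (2 / u) * (1 / u) := by
    simpa only [mul_zero] using
      intervalIntegral.integral_comp_mul_left_mul_one_div (fun u => F (2 / u)) hm.ne' 0 T
  refine ⟨fun T hT => ?_, ?_⟩
  · rw [hscale]
    exact mul_nonneg (by positivity) (intervalIntegral.integral_nonneg (by positivity)
      fun u hu => F_two_div_mul_one_div_nonneg hu.1)
  · simp_rw [hscale]
    exact isBigO_two_div_mul_integral_F_two_div_mul_one_div.comp_tendsto
      (tendsto_id.const_mul_atTop hm)
end
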